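/- For a positive integer m, nonzero real λ, and nonnegative integers n, k with k ≤ n, the degenerate Whitney numbers of the second kind satisfy W_{m+1,λ}(n,k) = (1/((m+1)^k·m^{n−k}))·∑_{j=0}^{n} C(n,j)·(−1)^{n−j}·(m+1)^j·⟨1⟩_{n−j,mλ}·W_{m,(m/(m+1))λ}(j,k), with the convention W_{m,μ}(j,k) = 0 for k > j. -/
import Mathlib


open Finset

noncomputable def dff (lam x : ℝ) (n : ℕ) : ℝ := ∏ i ∈ Finset.range n, (x - i * lam)

noncomputable def drf (lam x : ℝ) (n : ℕ) : ℝ := ∏ i ∈ Finset.range n, (x + i * lam)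

lemma dff_succ (mu x : ℝ) (n : ℕ) : dff mu x (n+1) = dff mu x n * (x - n * mu) :=
  Finset.prod_range_succ _ _

lemma dff_vandermonde (mu : ℝ) (n : ℕ) (a b : ℝ) :
    dff mu (a + b) n = ∑ j ∈ range (n+1), (n.choose j : ℝ) * dff mu a j * dff mu b (n - j) := by
  induction n with
  | zero => simp [dff]
  | succ n ih =>
    rw [dff_succ, ih, Finset.sum_mul]
    have key : ∀ j ∈ range (n+1),
        (n.choose j : ℝ) * dff mu a j * dff mu b (n-j) * (a + b - n * mu)
        = (n.choose j : ℝ) * (dff mu a (j+1) * dff mu b (n-j))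
          + (n.choose j : ℝ) * (dff mu a j * dff mu b (n-j+1)) := by
      intro j hj
      have hj' : j ≤ n := Nat.lt_succ_iff.mp (mem_range.mp hj)
      rw [dff_succ, dff_succ, Nat.cast_sub hj']
      ring
    rw [Finset.sum_congr rfl key, Finset.sum_add_distrib]
    -- second sum: n - j + 1 = n + 1 - j for j ≤ n
    have h2 : ∑ j ∈ range (n+1), (n.choose j : ℝ) * (dff mu a j * dff mu b (n-j+1))
        = ∑ j ∈ range (n+1), (n.choose j : ℝ) * (dff mu a j * dff mu b (n+1-j)) := by
      refine Finset.sum_congr rfl fun j hj => ?_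
      have hj' : j ≤ n := Nat.lt_succ_iff.mp (mem_range.mp hj)
      rw [Nat.sub_add_comm hj']
    rw [h2]
    rw [Finset.sum_range_succ' (fun j => (Nat.choose (n+1) j : ℝ) * dff mu a j * dff mu b (n+1-j)) (n+1)]
    have h3 : ∀ j ∈ range (n+1),
        ((n+1).choose (j+1) : ℝ) * dff mu a (j+1) * dff mu b (n+1-(j+1))
        = (n.choose j : ℝ) * (dff mu a (j+1) * dff mu b (n-j))
          + (n.choose (j+1) : ℝ) * (dff mu a (j+1) * dff mu b (n-j)) := by
      intro j hj
      have : (n+1).choose (j+1) = n.choose j + n.choose (j+1) := Nat.choose_succ_succ n j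
      rw [this, show n + 1 - (j+1) = n - j from by omega]
      push_cast
      ring
    rw [Finset.sum_congr rfl h3, Finset.sum_add_distrib]
    have h4 : ∑ j ∈ range (n+1), (n.choose (j+1) : ℝ) * (dff mu a (j+1) * dff mu b (n-j))
        = ∑ j ∈ range (n+1), (n.choose j : ℝ) * (dff mu a j * dff mu b (n+1-j))
          - (n.choose 0 : ℝ) * (dff mu a 0 * dff mu b (n+1)) := by
      rw [Finset.sum_range_succ' (fun j => (n.choose j : ℝ) * (dff mu a j * dff mu b (n+1-j))) n]
      rw [Finset.sum_range_succ (fun j => (n.choose (j+1) : ℝ) * (dff mu a (j+1) * dff mu b (n-j))) n]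
      simp only [Nat.choose_succ_self, Nat.cast_zero, zero_mul, add_zero, Nat.sub_self,
        Nat.add_sub_cancel_left]
      have : ∀ j ∈ range n, (n.choose (j+1) : ℝ) * (dff mu a (j+1) * dff mu b (n-j))
          = (n.choose (j+1) : ℝ) * (dff mu a (j+1) * dff mu b (n+1-(j+1))) := by
        intro j hj
        rw [show n + 1 - (j+1) = n - j from by omega]
      rw [Finset.sum_congr rfl this]
      simp only [Nat.sub_zero]
      ring
    rw [h4]
    simp [Nat.choose_zero_right]
    ring

lemma dff_one_self_ne_zero (k : ℕ) : dff 1 (k : ℝ) k ≠ 0 := by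
  unfold dff
  refine Finset.prod_ne_zero_iff.mpr fun i hi => ?_
  have : i < k := mem_range.mp hi
  have : (i : ℝ) < k := by exact_mod_cast this
  simp only [mul_one]
  linarith

lemma dff_one_eq_zero {j k : ℕ} (h : j < k) : dff 1 (j : ℝ) k = 0 := by
  unfold dff
  exact Finset.prod_eq_zero (mem_range.mpr h) (by simp)

lemma lin_indep (n : ℕ) (c : ℕ → ℝ)
    (h : ∀ x : ℝ, ∑ k ∈ range (n+1), c k * dff 1 x k = 0) :
    ∀ k, k ≤ n → c k = 0 := by
  intro k
  induction k using Nat.strong_induction_on with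
  | _ k ih =>
    intro hk
    have hs := h (k : ℝ)
    have hsingle : ∑ i ∈ range (n+1), c i * dff 1 (k : ℝ) i = c k * dff 1 (k : ℝ) k := by
      refine Finset.sum_eq_single k (fun i hi hne => ?_) (fun h' => absurd (mem_range.mpr (Nat.lt_succ_of_le hk)) h')
      rcases lt_or_gt_of_ne hne with h1 | h1
      · rw [ih i h1 (le_trans (le_of_lt h1) hk)]; ring
      · rw [dff_one_eq_zero h1]; ring
    rw [hsingle] at hs
    exact (mul_eq_zero.mp hs).resolve_right (dff_one_self_ne_zero k)

lemma dff_neg_one (mu : ℝ) (r : ℕ) : dff mu (-1) r = (-1)^r * drf mu 1 r := by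
  unfold dff drf
  rw [show ((-1:ℝ))^r = ∏ _i ∈ range r, (-1:ℝ) from by
    rw [Finset.prod_const, Finset.card_range], ← Finset.prod_mul_distrib]
  exact Finset.prod_congr rfl fun i _ => by ring

theorem stmt19 (m : ℕ) (hm : 1 ≤ m) (lam : ℝ) (hlam : lam ≠ 0)
    (W1 W2 : ℕ → ℕ → ℝ)
    (hW1 : ∀ (x : ℝ) (n : ℕ), dff lam (((m : ℝ) + 1) * x + 1) n =
      ∑ k ∈ Finset.range (n + 1), W1 n k * ((m : ℝ) + 1) ^ k * dff 1 x k)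
    (hW2 : ∀ (x : ℝ) (n : ℕ), dff (((m : ℝ) / ((m : ℝ) + 1)) * lam) ((m : ℝ) * x + 1) n =
      ∑ k ∈ Finset.range (n + 1), W2 n k * (m : ℝ) ^ k * dff 1 x k)
    (hW2conv : ∀ j k : ℕ, j < k → W2 j k = 0)
    (n k : ℕ) (hk : k ≤ n) :
    W1 n k = (1 / (((m : ℝ) + 1) ^ k * (m : ℝ) ^ (n - k))) *
      ∑ j ∈ Finset.range (n + 1), (Nat.choose n j : ℝ) * (-1 : ℝ) ^ (n - j) *
        ((m : ℝ) + 1) ^ j * drf ((m : ℝ) * lam) 1 (n - j) * W2 j k := by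
  have hmpos : (0:ℝ) < (m:ℝ) := by exact_mod_cast Nat.pos_of_ne_zero (by omega)
  have hm0 : (m : ℝ) ≠ 0 := ne_of_gt hmpos
  have hm1 : (m : ℝ) + 1 ≠ 0 := by positivity
  set S : ℕ → ℝ := fun k => ∑ j ∈ Finset.range (n + 1), (Nat.choose n j : ℝ) * (-1 : ℝ) ^ (n - j) *
        ((m : ℝ) + 1) ^ j * drf ((m : ℝ) * lam) 1 (n - j) * W2 j k with hS
  have key : ∀ x : ℝ, ∑ i ∈ range (n+1),
      (W1 n i * ((m:ℝ)+1)^i * (m:ℝ)^n - S i * (m:ℝ)^i) * dff 1 x i = 0 := by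
    intro x
    have e1 : (m:ℝ)^n * dff lam (((m:ℝ)+1)*x+1) n
        = dff ((m:ℝ)*lam) ((m:ℝ)*((m:ℝ)+1)*x + (m:ℝ)) n := by
      unfold dff
      rw [show ((m:ℝ))^n = ∏ _i ∈ range n, (m:ℝ) from by
        rw [Finset.prod_const, Finset.card_range], ← Finset.prod_mul_distrib]
      exact Finset.prod_congr rfl fun i _ => by ring
    have e2 : ∀ j : ℕ, ((m:ℝ)+1)^j * dff (((m:ℝ)/((m:ℝ)+1))*lam) ((m:ℝ)*x+1) j
        = dff ((m:ℝ)*lam) ((m:ℝ)*((m:ℝ)+1)*x + (m:ℝ) + 1) j := by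
      intro j
      unfold dff
      rw [show ((m:ℝ)+1)^j = ∏ _i ∈ range j, ((m:ℝ)+1) from by
        rw [Finset.prod_const, Finset.card_range], ← Finset.prod_mul_distrib]
      refine Finset.prod_congr rfl fun i _ => ?_
      field_simp
      ring
    have e3 : dff ((m:ℝ)*lam) ((m:ℝ)*((m:ℝ)+1)*x + (m:ℝ)) n
        = ∑ j ∈ range (n+1), (n.choose j : ℝ)
            * dff ((m:ℝ)*lam) ((m:ℝ)*((m:ℝ)+1)*x + (m:ℝ) + 1) j
            * ((-1:ℝ)^(n-j) * drf ((m:ℝ)*lam) 1 (n-j)) := by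
      have h := dff_vandermonde ((m:ℝ)*lam) n ((m:ℝ)*((m:ℝ)+1)*x + (m:ℝ) + 1) (-1)
      rw [show (m:ℝ)*((m:ℝ)+1)*x + (m:ℝ) + 1 + -1 = (m:ℝ)*((m:ℝ)+1)*x + (m:ℝ) from by ring] at h
      rw [h]
      exact Finset.sum_congr rfl fun j _ => by rw [dff_neg_one]
    have lhs : (m:ℝ)^n * dff lam (((m:ℝ)+1)*x+1) n
        = ∑ i ∈ range (n+1), W1 n i * ((m:ℝ)+1)^i * (m:ℝ)^n * dff 1 x i := by
      rw [hW1 x n, Finset.mul_sum]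
      exact Finset.sum_congr rfl fun i _ => by ring
    have rhs : (m:ℝ)^n * dff lam (((m:ℝ)+1)*x+1) n
        = ∑ i ∈ range (n+1), S i * (m:ℝ)^i * dff 1 x i := by
      rw [e1, e3]
      have step : ∀ j ∈ range (n+1),
          (n.choose j : ℝ) * dff ((m:ℝ)*lam) ((m:ℝ)*((m:ℝ)+1)*x + (m:ℝ) + 1) j
            * ((-1:ℝ)^(n-j) * drf ((m:ℝ)*lam) 1 (n-j))
          = ∑ i ∈ range (n+1), ((n.choose j : ℝ) * (-1:ℝ)^(n-j) * ((m:ℝ)+1)^j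
              * drf ((m:ℝ)*lam) 1 (n-j) * W2 j i) * ((m:ℝ)^i * dff 1 x i) := by
        intro j hj
        have hj' : j ≤ n := Nat.lt_succ_iff.mp (mem_range.mp hj)
        have ext : ∑ i ∈ range (j+1), W2 j i * (m:ℝ)^i * dff 1 x i
            = ∑ i ∈ range (n+1), W2 j i * (m:ℝ)^i * dff 1 x i := by
          refine Finset.sum_subset (Finset.range_subset_range.mpr (by omega)) fun i _ hi => ?_
          rw [hW2conv j i (by simp at hi ⊢; omega)]
          ring
        rw [← e2 j, hW2 x j, ext]
        simp only [Finset.mul_sum, Finset.sum_mul]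
        exact Finset.sum_congr rfl fun i _ => by ring
      rw [Finset.sum_congr rfl step, Finset.sum_comm]
      refine Finset.sum_congr rfl fun i _ => ?_
      rw [hS]
      simp only [Finset.sum_mul]
      exact Finset.sum_congr rfl fun j _ => by ring
    rw [Finset.sum_congr rfl (g := fun i => W1 n i * ((m:ℝ)+1)^i * (m:ℝ)^n * dff 1 x i
        - S i * (m:ℝ)^i * dff 1 x i) (fun i _ => by ring), Finset.sum_sub_distrib,
      ← lhs, ← rhs, sub_self]
  have hzero := lin_indep n _ key k hk
  have heq : W1 n k * ((m:ℝ)+1)^k * (m:ℝ)^n = S k * (m:ℝ)^k := by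
    linarith [sub_eq_zero.mp hzero]
  have hpow : (m:ℝ)^n = (m:ℝ)^(n-k) * (m:ℝ)^k := by
    rw [← pow_add]
    congr 1
    omega
  rw [hpow] at heq
  have hmain : W1 n k * (((m:ℝ)+1)^k * (m:ℝ)^(n-k)) = S k := by
    have hmk : (m:ℝ)^k ≠ 0 := pow_ne_zero _ hm0
    apply mul_right_cancel₀ hmk
    linear_combination heq
  have hD : (((m:ℝ)+1)^k * (m:ℝ)^(n-k)) ≠ 0 := by positivity
  show W1 n k = (1 / (((m : ℝ) + 1) ^ k * (m : ℝ) ^ (n - k))) * S k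
  rw [one_div, inv_mul_eq_div, eq_div_iff hD]
  linear_combination hmain
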